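/- arXiv:2402.04029 — 6 statements merged into one kernel-verified Lean document; each statement's English description precedes it below -/
import Mathlib

section
/- If f : ℝⁿ₊ → ℝⁿ₊ is concave with respect to the componentwise order (i.e., f(t·x + (1-t)·y) ≥ t·f(x) + (1-t)·f(y) for all x, y in the nonnegative orthant and t ∈ (0,1)), then f is monotone: x ≤ y implies f(x) ≤ f(y) for all x, y in the nonnegative orthant. -/
/-!
For `0 ≤ x ≤ y` and `t ∈ (0, 1)`, the point `w = (1 - t)⁻¹ • (y - t • x)` is again nonnegative
and `y = t • x + (1 - t) • w`, so concavity and `0 ≤ f w` give `t • f x ≤ f y`. Letting `t → 1`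
yields `f x ≤ f y`.
-/

open Set

lemma le_of_forall_smul_le {F : Type*} [TopologicalSpace F] [PartialOrder F]
    [OrderClosedTopology F] [MulAction ℝ F] [ContinuousSMul ℝ F] {a b : F}
    (h : ∀ t : ℝ, 0 < t → t < 1 → t • a ≤ b) : a ≤ b := by
  have hclosed : IsClosed {t : ℝ | t • a ≤ b} :=
    isClosed_le (continuous_id.smul continuous_const) continuous_const
  have hsub : Icc (0 : ℝ) 1 ⊆ {t : ℝ | t • a ≤ b} := by
    rw [← closure_Ioo zero_ne_one]
    exact hclosed.closure_subset_iff.2 fun t ht => h t ht.1 ht.2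
  simpa using hsub (right_mem_Icc.2 zero_le_one)

section

variable {E F : Type*} [AddCommGroup E] [PartialOrder E] [IsOrderedAddMonoid E] [Module ℝ E]
  [PosSMulMono ℝ E] [AddCommGroup F] [PartialOrder F] [IsOrderedAddMonoid F] [Module ℝ F]
  [PosSMulMono ℝ F]

lemma ConcaveOn.smul_le_of_le_of_nonneg {f : E → F} (hf : ConcaveOn ℝ (Ici 0) f)
    (hf₀ : ∀ x, 0 ≤ x → 0 ≤ f x) {x y : E} (hx : 0 ≤ x) (hxy : x ≤ y) {t : ℝ}
    (ht₀ : 0 < t) (ht₁ : t < 1) : t • f x ≤ f y := by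
  have hs : 0 < 1 - t := sub_pos.2 ht₁
  set w : E := (1 - t)⁻¹ • (y - t • x)
  have hw : 0 ≤ w := smul_nonneg (inv_nonneg.2 hs.le) <| sub_nonneg.2 <|
    (smul_le_of_le_one_left hx ht₁.le).trans hxy
  have hy : t • x + (1 - t) • w = y := by
    rw [smul_inv_smul₀ hs.ne', add_sub_cancel]
  calc t • f x ≤ t • f x + (1 - t) • f w := le_add_of_nonneg_right (smul_nonneg hs.le (hf₀ w hw))
    _ ≤ f y := hy ▸ hf.2 (mem_Ici.2 hx) (mem_Ici.2 hw) ht₀.le hs.le (add_sub_cancel t 1)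

theorem ConcaveOn.monotoneOn_Ici_of_nonneg [TopologicalSpace F] [OrderClosedTopology F]
    [ContinuousSMul ℝ F] {f : E → F} (hf : ConcaveOn ℝ (Ici 0) f)
    (hf₀ : ∀ x, 0 ≤ x → 0 ≤ f x) : MonotoneOn f (Ici 0) := fun _ hx _ _ hxy =>
  le_of_forall_smul_le fun _ ht₀ ht₁ => hf.smul_le_of_le_of_nonneg hf₀ hx hxy ht₀ ht₁

end

/-- A nonnegative concave mapping on the nonnegative orthant is monotone. -/
theorem nc_mapping_monotone {n : ℕ} (f : (Fin n → ℝ) → (Fin n → ℝ))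
    (hmap : ∀ x : Fin n → ℝ, 0 ≤ x → 0 ≤ f x)
    (hconc : ∀ x y : Fin n → ℝ, 0 ≤ x → 0 ≤ y → ∀ t : ℝ, 0 < t → t < 1 →
      t • f x + (1 - t) • f y ≤ f (t • x + (1 - t) • y)) :
    ∀ x y : Fin n → ℝ, 0 ≤ x → 0 ≤ y → x ≤ y → f x ≤ f y := by
  have hf : ConcaveOn ℝ (Ici 0) f := by
    refine concaveOn_iff_forall_pos.2 ⟨convex_Ici 0, fun x hx y hy a b ha hb hab => ?_⟩
    obtain rfl : b = 1 - a := eq_sub_of_add_eq' hab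
    exact hconc x y hx hy a ha (sub_pos.1 hb)
  intro x y hx hy hxy
  exact hf.monotoneOn_Ici_of_nonneg hmap hx hy hxy
end

section
/- Every positive concave mapping is a standard interference mapping: if g : ℝⁿ₊ → int(ℝⁿ₊) is concave with respect to the componentwise order, then g is monotone (x ≤ y implies g(x) ≤ g(y)) and scalable (for every x ∈ ℝⁿ₊ and every λ > 1, g(λx) is strictly componentwise less than λ·g(x)). -/
/-!
Each coordinate of `g` is a real concave function on the cone `ℝⁿ₊` that is bounded below.
For `x ≤ y` and small `t > 0`, the point `y` is the convex combination `t • w + (1 - t) • x` with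
`w = x + t⁻¹ • (y - x)` still in the cone, so concavity and a lower bound `c` at `w` give
`g y ≥ (1 - t) g x + t c`; letting `t → 0` yields monotonicity. Scalability comes from writing
`x = λ⁻¹ • (λ • x) + (1 - λ⁻¹) • 0`: concavity and `g 0 ≫ 0` give `g x ≫ λ⁻¹ g (λ • x)`.
-/

open Set Filter Topology

theorem ConcaveOn.apply {𝕜 E ι : Type*} {β : ι → Type*} [Semiring 𝕜] [PartialOrder 𝕜]
    [AddCommMonoid E] [SMul 𝕜 E] [∀ i, AddCommMonoid (β i)] [∀ i, PartialOrder (β i)]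
    [∀ i, SMul 𝕜 (β i)] {s : Set E} {f : E → ∀ i, β i} (hf : ConcaveOn 𝕜 s f) (i : ι) :
    ConcaveOn 𝕜 s (fun x ↦ f x i) :=
  ⟨hf.1, fun _ hx _ hy _ _ ha hb hab ↦ hf.2 hx hy ha hb hab i⟩

theorem ConcaveOn.monotoneOn_of_bddBelow {E : Type*} [AddCommGroup E] [PartialOrder E]
    [IsOrderedAddMonoid E] [Module ℝ E] [PosSMulMono ℝ E] {f : E → ℝ}
    (hf : ConcaveOn ℝ (Ici 0) f) (hbdd : BddBelow (f '' Ici 0)) : MonotoneOn f (Ici 0) := by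
  intro x hx y hy hxy
  obtain ⟨c, hc⟩ := hbdd
  have key : ∀ t ∈ Ioo (0 : ℝ) 1, (1 - t) * (f x - c) ≤ f y - c := by
    rintro t ⟨ht0, ht1⟩
    set w := x + t⁻¹ • (y - x)
    have hw : w ∈ Ici 0 :=
      add_nonneg hx (smul_nonneg (inv_nonneg.2 ht0.le) (sub_nonneg.2 hxy))
    have hy_eq : t • w + (1 - t) • x = y := by
      simp only [w, smul_add, smul_smul, mul_inv_cancel₀ ht0.ne', one_smul]
      module
    have hconc := hf.2 hw hx ht0.le (sub_nonneg.2 ht1.le) (add_sub_cancel _ _)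
    rw [hy_eq, smul_eq_mul, smul_eq_mul] at hconc
    nlinarith [hc (mem_image_of_mem f hw)]
  have hlim : Tendsto (fun t : ℝ ↦ (1 - t) * (f x - c)) (𝓝[>] 0) (𝓝 (f x - c)) := by
    have : Continuous (fun t : ℝ ↦ (1 - t) * (f x - c)) := by fun_prop
    simpa using (this.tendsto 0).mono_left nhdsWithin_le_nhds
  exact sub_le_sub_iff_right c |>.1 <|
    le_of_tendsto hlim (eventually_of_mem (Ioo_mem_nhdsGT one_pos) key)

theorem ConcaveOn.apply_smul_lt_mul {E : Type*} [AddCommGroup E] [Module ℝ E] {s : Set E}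
    {f : E → ℝ} {x : E} {c : ℝ} (hf : ConcaveOn ℝ s f) (h0 : (0 : E) ∈ s) (hf0 : 0 < f 0)
    (hx : c • x ∈ s) (hc : 1 < c) : f (c • x) < c * f x := by
  have hc0 : 0 < c := one_pos.trans hc
  have hconc := hf.2 hx h0 (inv_pos.2 hc0).le (sub_nonneg.2 (inv_le_one_of_one_le₀ hc.le))
    (add_sub_cancel _ _)
  rw [inv_smul_smul₀ hc0.ne', smul_zero, add_zero, smul_eq_mul, smul_eq_mul] at hconc
  have hrest : 0 < (1 - c⁻¹) * f 0 := mul_pos (sub_pos.2 (inv_lt_one_of_one_lt₀ hc)) hf0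
  exact (inv_mul_lt_iff₀ hc0).1 (by linarith)

/-- Every positive concave mapping is a standard interference mapping
(monotone and scalable). -/
theorem positive_concave_is_standard_interference {n : ℕ}
    (g : (Fin n → ℝ) → (Fin n → ℝ))
    (hpos : ∀ x : Fin n → ℝ, 0 ≤ x → ∀ i, 0 < g x i)
    (hconc : ∀ x y : Fin n → ℝ, 0 ≤ x → 0 ≤ y → ∀ t : ℝ, 0 < t → t < 1 →
      t • g x + (1 - t) • g y ≤ g (t • x + (1 - t) • y)) :
    (∀ x y : Fin n → ℝ, 0 ≤ x → 0 ≤ y → x ≤ y → g x ≤ g y) ∧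
    (∀ x : Fin n → ℝ, 0 ≤ x → ∀ lam : ℝ, 1 < lam → ∀ i, g (lam • x) i < lam * g x i) := by
  have hg : ConcaveOn ℝ (Ici 0) g := by
    refine concaveOn_iff_forall_pos.2 ⟨convex_Ici 0, fun x hx y hy a b ha _ hab ↦ ?_⟩
    obtain rfl : b = 1 - a := by linarith
    exact hconc x y hx hy a ha (by linarith)
  refine ⟨fun x y hx hy hxy i ↦ ?_, fun x hx lam hlam i ↦ ?_⟩
  · have hbdd : BddBelow ((g · i) '' Ici 0) := ⟨0, by
      rintro _ ⟨z, hz, rfl⟩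
      exact (hpos z hz i).le⟩
    exact (hg.apply i).monotoneOn_of_bddBelow hbdd hx hy hxy
  · exact (hg.apply i).apply_smul_lt_mul self_mem_Ici (hpos 0 le_rfl i)
      (smul_nonneg (zero_le_one.trans hlam.le) hx) hlam
end

section
/- A standard interference mapping has at most one fixed point: if g : ℝⁿ₊ → int(ℝⁿ₊) is monotone and scalable (g(λx) ≪ λg(x) for all λ > 1 and x ∈ ℝⁿ₊), and x, y ∈ ℝⁿ₊ satisfy g(x) = x and g(y) = y, then x = y. -/
/-- A standard interference mapping has at most one fixed point (Yates). -/
theorem si_mapping_fixed_point_unique {n : ℕ}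
    (g : (Fin n → ℝ) → (Fin n → ℝ))
    (hpos : ∀ z : Fin n → ℝ, 0 ≤ z → ∀ i, 0 < g z i)
    (hmono : ∀ a b : Fin n → ℝ, 0 ≤ a → 0 ≤ b → a ≤ b → g a ≤ g b)
    (hscal : ∀ z : Fin n → ℝ, 0 ≤ z → ∀ lam : ℝ, 1 < lam → ∀ i, g (lam • z) i < lam * g z i)
    (x y : Fin n → ℝ) (hx : 0 ≤ x) (hy : 0 ≤ y)
    (hfx : g x = x) (hfy : g y = y) :
    x = y := by
  rcases Nat.eq_zero_or_pos n with h0 | hn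
  · subst h0; funext i; exact i.elim0
  · have hne : (Finset.univ : Finset (Fin n)).Nonempty := by
      simpa [Finset.univ_nonempty_iff] using Fin.pos_iff_nonempty.mp hn
    have key : ∀ a b : Fin n → ℝ, 0 ≤ a → 0 ≤ b → g a = a → g b = b → b ≤ a := by
      intro a b ha hb hfa hfb
      by_contra h
      rw [Pi.le_def] at h
      push_neg at h
      obtain ⟨i0, hi0⟩ := h
      have hapos : ∀ i, 0 < a i := by
        intro i; have := hpos a ha i; rwa [hfa] at this
      set lam := Finset.univ.sup' hne (fun i => b i / a i) with hlam
      have hlam_ge : ∀ i, b i / a i ≤ lam := fun i =>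
        Finset.le_sup' (fun i => b i / a i) (Finset.mem_univ i)
      have hlam_gt : 1 < lam := by
        have : 1 < b i0 / a i0 := (one_lt_div (hapos i0)).mpr hi0
        exact lt_of_lt_of_le this (hlam_ge i0)
      have hble : b ≤ lam • a := by
        intro i
        have := (div_le_iff₀ (hapos i)).mp (hlam_ge i)
        simpa [Pi.smul_apply, smul_eq_mul] using this
      have hla : (0 : Fin n → ℝ) ≤ lam • a := by
        intro i
        exact smul_nonneg (le_of_lt (lt_trans zero_lt_one hlam_gt)) (ha i)
      obtain ⟨j, _, hj⟩ := Finset.exists_mem_eq_sup' hne (fun i => b i / a i)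
      have h1 : b j ≤ g (lam • a) j := by
        have := hmono b (lam • a) hb hla hble j
        rwa [hfb] at this
      have h2 : g (lam • a) j < lam * a j := by
        have := hscal a ha lam hlam_gt j
        rwa [hfa] at this
      have h3 : lam * a j = b j := by
        rw [hlam, hj]
        field_simp
        rw [mul_div_assoc, div_self (hapos j).ne', mul_one]
      exact absurd (h1.trans_lt h2) (by rw [h3]; exact lt_irrefl _)
    exact le_antisymm (key y x hy hx hfy hfx) (key x y hx hy hfx hfy)
end

section
/- A bounded standard interference mapping has a (unique) fixed point: let g : ℝⁿ₊ → int(ℝⁿ₊) be monotone and suppose there exists M > 0 such that g(z) ≤ M·𝟙 componentwise for all z ∈ ℝⁿ₊ (where 𝟙 is the all-ones vector). Then g has a fixed point in int(ℝⁿ₊); if additionally g is scalable, this fixed point is unique. -/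
/-- Scalability forces any two nonnegative fixed points to be comparable. -/
lemma si_fixed_le {n : ℕ} (g : (Fin n → ℝ) → (Fin n → ℝ))
    (hpos : ∀ z : Fin n → ℝ, 0 ≤ z → ∀ i, 0 < g z i)
    (hmono : ∀ a b : Fin n → ℝ, 0 ≤ a → 0 ≤ b → a ≤ b → g a ≤ g b)
    (hsc : ∀ z : Fin n → ℝ, 0 ≤ z → ∀ lam : ℝ, 1 < lam → ∀ i, g (lam • z) i < lam * g z i)
    (x y : Fin n → ℝ) (hx0 : 0 ≤ x) (hy0 : 0 ≤ y) (hx : g x = x) (hy : g y = y) :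
    x ≤ y := by
  have hxpos : ∀ i, 0 < x i := fun i => hx ▸ hpos x hx0 i
  have hypos : ∀ i, 0 < y i := fun i => hy ▸ hpos y hy0 i
  rcases Nat.eq_zero_or_pos n with hn | hn
  · intro i; exact absurd (i.2.trans_eq hn) (Nat.not_lt_zero _)
  haveI : Nonempty (Fin n) := Fin.pos_iff_nonempty.mp hn
  have hne : (Finset.univ : Finset (Fin n)).Nonempty := Finset.univ_nonempty
  set lam : ℝ := Finset.univ.sup' hne (fun i => x i / y i) with hlam
  obtain ⟨i0, _, hi0⟩ := Finset.exists_mem_eq_sup' hne (fun i => x i / y i)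
  have hle : ∀ i, x i ≤ lam * y i := by
    intro i
    have h1 : x i / y i ≤ lam := by
      rw [hlam]; exact Finset.le_sup' (fun i => x i / y i) (Finset.mem_univ i)
    calc x i = (x i / y i) * y i := (div_mul_cancel₀ _ (hypos i).ne').symm
    _ ≤ lam * y i := by nlinarith [hypos i]
  have hlampos : 0 < lam := lt_of_lt_of_le (div_pos (hxpos i0) (hypos i0)) (hi0 ▸ le_rfl)
  by_cases h1 : lam ≤ 1
  · intro i
    calc x i ≤ lam * y i := hle i
    _ ≤ 1 * y i := by nlinarith [hypos i]
    _ = y i := one_mul _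
  · exfalso
    push_neg at h1
    have hly0 : (0:Fin n → ℝ) ≤ lam • y := fun i => by
      simpa using mul_nonneg hlampos.le (hy0 i)
    have hxle : x ≤ lam • y := fun i => by simpa using hle i
    have h2 : x i0 ≤ g (lam • y) i0 := by
      have := hmono x (lam • y) hx0 hly0 hxle i0
      rwa [hx] at this
    have h3 : g (lam • y) i0 < lam * g y i0 := hsc y hy0 lam h1 i0
    rw [hy] at h3
    have hx0eq : x i0 = lam * y i0 := by
      calc x i0 = x i0 / y i0 * y i0 := (div_mul_cancel₀ _ (hypos i0).ne').symm
      _ = lam * y i0 := by rw [← hi0, ← hlam]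
    linarith

/-- A bounded monotone mapping into the positive orthant has a fixed point in
int(ℝⁿ₊); if it is additionally scalable, the fixed point is unique. -/
theorem bounded_si_mapping_has_fixed_point {n : ℕ}
    (g : (Fin n → ℝ) → (Fin n → ℝ))
    (hpos : ∀ z : Fin n → ℝ, 0 ≤ z → ∀ i, 0 < g z i)
    (hmono : ∀ a b : Fin n → ℝ, 0 ≤ a → 0 ≤ b → a ≤ b → g a ≤ g b)
    (M : ℝ) (hM : 0 < M)
    (hbdd : ∀ z : Fin n → ℝ, 0 ≤ z → ∀ i, g z i ≤ M) :
    (∃ z : Fin n → ℝ, (∀ i, 0 < z i) ∧ g z = z) ∧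
    ((∀ z : Fin n → ℝ, 0 ≤ z → ∀ lam : ℝ, 1 < lam → ∀ i, g (lam • z) i < lam * g z i) →
      ∃! z : Fin n → ℝ, 0 ≤ z ∧ g z = z) := by
  -- Knaster–Tarski: sup of the post-fixed points in [0, M𝟙]
  set S : Set (Fin n → ℝ) := {z | 0 ≤ z ∧ (∀ i, z i ≤ M) ∧ z ≤ g z} with hS
  have h0S : (0 : Fin n → ℝ) ∈ S :=
    ⟨le_rfl, fun i => hM.le, fun i => (hpos 0 le_rfl i).le⟩
  set w : Fin n → ℝ := fun i => sSup ((fun z => z i) '' S) with hw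
  have hbddi : ∀ i, BddAbove ((fun z : Fin n → ℝ => z i) '' S) := by
    rintro i
    exact ⟨M, by rintro _ ⟨z, hz, rfl⟩; exact hz.2.1 i⟩
  have hnei : ∀ i, ((fun z : Fin n → ℝ => z i) '' S).Nonempty :=
    fun i => ⟨0, 0, h0S, rfl⟩
  have hzlew : ∀ z ∈ S, z ≤ w := fun z hz i => le_csSup (hbddi i) ⟨z, hz, rfl⟩
  have hw0 : (0 : Fin n → ℝ) ≤ w := hzlew 0 h0S
  have hwM : ∀ i, w i ≤ M := fun i =>
    csSup_le (hnei i) (by rintro _ ⟨z, hz, rfl⟩; exact hz.2.1 i)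
  have hwg : w ≤ g w := by
    intro i
    apply csSup_le (hnei i)
    rintro _ ⟨z, hz, rfl⟩
    calc z i ≤ g z i := hz.2.2 i
    _ ≤ g w i := hmono z w hz.1 hw0 (hzlew z hz) i
  have hgwS : g w ∈ S := by
    refine ⟨fun i => (hpos w hw0 i).le, fun i => hbdd w hw0 i, ?_⟩
    exact hmono w (g w) hw0 (fun i => (hpos w hw0 i).le) hwg
  have hfix : g w = w := le_antisymm (hzlew _ hgwS) hwg
  have hwpos : ∀ i, 0 < w i := fun i => hfix ▸ hpos w hw0 i
  constructor
  · exact ⟨w, hwpos, hfix⟩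
  · intro hsc
    refine ⟨w, ⟨hw0, hfix⟩, ?_⟩
    rintro y ⟨hy0, hy⟩
    exact le_antisymm (si_fixed_le g hpos hmono hsc y w hy0 hw0 hy hfix)
      (si_fixed_le g hpos hmono hsc w y hw0 hy0 hfix hy)
end

section
/- Geometric convergence of the fixed point iteration for positive concave mappings: let g : ℝⁿ₊ → int(ℝⁿ₊) be concave with respect to the componentwise order and have a fixed point x⋆ ∈ int(ℝⁿ₊). Then for every x₁ ∈ ℝⁿ₊, the iterates x_{k+1} = g(x_k) converge to x⋆ geometrically: there exist c ∈ [0,1) and γ > 0 such that ‖x_{k+1} - x⋆‖ ≤ γ·cᵏ for all k ∈ ℕ, where ‖·‖ is any norm on ℝⁿ. -/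
/-!
A concave map that is nonnegative on the orthant is monotone there. Pick `δ ∈ (0, 1)` with
`δ • x⋆ ≤ g 0`. Concavity along the ray through the fixed point `x⋆` gives
`(1 - (1 - δ) r) • x⋆ ≤ g x` whenever `(1 - r) • x⋆ ≤ x` with `r ∈ [0, 1]`, and
`g x ≤ (1 + (1 - δ) r) • x⋆` whenever `0 ≤ x ≤ (1 + r) • x⋆`. The strictly positive iterate
`x 1 = g (x 0)` lies between two multiples of `x⋆`, and each further step of the iteration
shrinks both gaps by the factor `1 - δ`.
-/

open Set Filter Topology

variable {ι : Type*}

theorem concaveOn_Ici_zero_of_forall_lt_one {g : (ι → ℝ) → ι → ℝ}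
    (h : ∀ x y : ι → ℝ, 0 ≤ x → 0 ≤ y → ∀ t : ℝ, 0 < t → t < 1 →
      t • g x + (1 - t) • g y ≤ g (t • x + (1 - t) • y)) :
    ConcaveOn ℝ (Ici 0) g := by
  refine concaveOn_iff_forall_pos.2 ⟨convex_Ici 0, fun x hx y hy a b ha hb hab => ?_⟩
  obtain rfl : b = 1 - a := by linarith
  exact h x y hx hy a ha (by linarith)

theorem exists_pos_lt_one_smul_le [Finite ι] (u : ι → ℝ) {v : ι → ℝ} (hv : ∀ i, 0 < v i) :
    ∃ a : ℝ, 0 < a ∧ a < 1 ∧ a • u ≤ v := by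
  have hsmall : ∀ᶠ a in 𝓝 (0 : ℝ), a < 1 ∧ ∀ i, a * u i < v i :=
    (eventually_lt_nhds zero_lt_one).and <| eventually_all.2 fun i =>
      (tendsto_id.mul_const (u i)).eventually_lt_const (by simpa using hv i)
  obtain ⟨a, ⟨ha1, hav⟩, ha0⟩ := ((hsmall.filter_mono nhdsWithin_le_nhds).and
    (self_mem_nhdsWithin (s := Ioi 0))).exists
  exact ⟨a, ha0, ha1, fun i => (hav i).le⟩

theorem exists_one_le_le_smul [Finite ι] {u : ι → ℝ} (hu : ∀ i, 0 < u i) (v : ι → ℝ) :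
    ∃ b : ℝ, 1 ≤ b ∧ v ≤ b • u :=
  ((eventually_ge_atTop 1).and <| eventually_all.2 fun i =>
    (tendsto_id.atTop_mul_const (hu i)).eventually_ge_atTop (v i)).exists

theorem norm_sub_le_of_one_sub_smul_le_of_le_one_add_smul [Fintype ι] {u x : ι → ℝ} {r : ℝ}
    (hr : 0 ≤ r) (hlo : (1 - r) • u ≤ x) (hhi : x ≤ (1 + r) • u) :
    ‖x - u‖ ≤ r * ‖u‖ := by
  refine (pi_norm_le_iff_of_nonneg (by positivity)).2 fun i => ?_
  have hui : u i ≤ ‖u‖ := (le_abs_self _).trans (norm_le_pi_norm u i)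
  have hlo := hlo i
  have hhi := hhi i
  simp only [Pi.smul_apply, smul_eq_mul] at hlo hhi
  rw [Pi.sub_apply, Real.norm_eq_abs, abs_le]
  constructor <;> nlinarith [mul_le_mul_of_nonneg_left hui hr]

theorem ConcaveOn.monotoneOn_Ici_zero {g : (ι → ℝ) → ι → ℝ} (hg : ConcaveOn ℝ (Ici 0) g)
    (hnn : ∀ z, 0 ≤ z → 0 ≤ g z) : MonotoneOn g (Ici 0) := by
  intro p hp q _ hpq i
  have key : ∀ t ∈ Ioo (0 : ℝ) 1, (1 - t) * g p i ≤ g q i := by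
    rintro t ⟨ht0, ht1⟩
    set z := p + t⁻¹ • (q - p)
    have hz : 0 ≤ z := add_nonneg hp (smul_nonneg (inv_nonneg.2 ht0.le) (sub_nonneg.2 hpq))
    have hq_eq : t • z + (1 - t) • p = q := by
      simp only [z, smul_add, smul_smul, mul_inv_cancel₀ ht0.ne', one_smul]
      module
    have hcomb := hg.2 hz hp ht0.le (sub_nonneg.2 ht1.le) (add_sub_cancel t 1) i
    rw [hq_eq] at hcomb
    simp only [Pi.add_apply, Pi.smul_apply, smul_eq_mul] at hcomb
    linarith [mul_nonneg ht0.le (hnn z hz i)]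
  have hlim : Tendsto (fun t : ℝ => (1 - t) * g p i) (𝓝[>] 0) (𝓝 (g p i)) := by
    have := ((continuous_const.sub continuous_id).mul continuous_const).tendsto (0 : ℝ)
      (f := fun t : ℝ => (1 - t) * g p i)
    simpa using this.mono_left nhdsWithin_le_nhds
  exact le_of_tendsto hlim (eventually_of_mem (Ioo_mem_nhdsGT one_pos) key)

section RayThroughFixedPoint

variable {g : (ι → ℝ) → ι → ℝ} {u : ι → ℝ} {δ r : ℝ}

theorem ConcaveOn.one_sub_mul_smul_le_apply (hg : ConcaveOn ℝ (Ici 0) g)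
    (hmono : MonotoneOn g (Ici 0)) (hu : 0 ≤ u) (hfix : g u = u) (hδ : δ • u ≤ g 0)
    (hr0 : 0 ≤ r) (hr1 : r ≤ 1) {x : ι → ℝ} (hx : (1 - r) • u ≤ x) :
    (1 - (1 - δ) * r) • u ≤ g x := by
  have hru : 0 ≤ (1 - r) • u := smul_nonneg (by linarith) hu
  calc (1 - (1 - δ) * r) • u = (1 - r) • u + r • (δ • u) := by module
    _ ≤ (1 - r) • g u + r • g 0 := by rw [hfix]; gcongr
    _ ≤ g ((1 - r) • u + r • 0) :=
      hg.2 hu self_mem_Ici (sub_nonneg.2 hr1) hr0 (sub_add_cancel 1 r)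
    _ = g ((1 - r) • u) := by rw [smul_zero, add_zero]
    _ ≤ g x := hmono hru (hru.trans hx) hx

theorem ConcaveOn.apply_le_one_add_mul_smul (hg : ConcaveOn ℝ (Ici 0) g)
    (hmono : MonotoneOn g (Ici 0)) (hu : 0 ≤ u) (hfix : g u = u) (hδ : δ • u ≤ g 0)
    (hr0 : 0 ≤ r) {x : ι → ℝ} (hx0 : 0 ≤ x) (hx : x ≤ (1 + r) • u) :
    g x ≤ (1 + (1 - δ) * r) • u := by
  have hs : 0 < 1 + r := by linarith
  have hsu : 0 ≤ (1 + r) • u := smul_nonneg hs.le hu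
  -- `u` lies on the segment from `0` to `(1 + r) • u`
  have hcomb : (1 + r)⁻¹ • g ((1 + r) • u) + (r / (1 + r)) • g 0 ≤ u := by
    have h := hg.2 hsu self_mem_Ici (inv_nonneg.2 hs.le) (div_nonneg hr0 hs.le)
      (by field_simp)
    rwa [smul_zero, add_zero, smul_smul, inv_mul_cancel₀ hs.ne', one_smul, hfix] at h
  have hscaled : g ((1 + r) • u) + r • g 0 ≤ (1 + r) • u := by
    have h := smul_le_smul_of_nonneg_left hcomb hs.le
    rwa [smul_add, smul_smul, smul_smul, mul_inv_cancel₀ hs.ne', one_smul,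
      mul_div_cancel₀ _ hs.ne'] at h
  calc g x ≤ g ((1 + r) • u) := hmono hx0 hsu hx
    _ ≤ (1 + r) • u - r • g 0 := le_sub_iff_add_le.2 hscaled
    _ ≤ (1 + r) • u - r • (δ • u) := by gcongr
    _ = (1 + (1 - δ) * r) • u := by module

theorem ConcaveOn.one_sub_pow_mul_smul_le_of_iterate (hg : ConcaveOn ℝ (Ici 0) g)
    (hmono : MonotoneOn g (Ici 0)) (hu : 0 ≤ u) (hfix : g u = u) (hδ : δ • u ≤ g 0)
    (hδ0 : 0 ≤ δ) (hδ1 : δ ≤ 1) (hr0 : 0 ≤ r) (hr1 : r ≤ 1) {x : ℕ → ι → ℝ}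
    (hxk : ∀ k, x (k + 1) = g (x k)) (h0 : (1 - r) • u ≤ x 0) :
    ∀ k, (1 - (1 - δ) ^ k * r) • u ≤ x k
  | 0 => by simpa using h0
  | k + 1 => by
    rw [hxk, pow_succ', mul_assoc]
    exact hg.one_sub_mul_smul_le_apply hmono hu hfix hδ
      (mul_nonneg (pow_nonneg (sub_nonneg.2 hδ1) k) hr0)
      (mul_le_one₀ (pow_le_one₀ (sub_nonneg.2 hδ1) (by linarith)) hr0 hr1)
      (hg.one_sub_pow_mul_smul_le_of_iterate hmono hu hfix hδ hδ0 hδ1 hr0 hr1 hxk h0 k)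

theorem ConcaveOn.le_one_add_pow_mul_smul_of_iterate (hg : ConcaveOn ℝ (Ici 0) g)
    (hmono : MonotoneOn g (Ici 0)) (hu : 0 ≤ u) (hfix : g u = u) (hδ : δ • u ≤ g 0)
    (hδ1 : δ ≤ 1) (hr0 : 0 ≤ r) {x : ℕ → ι → ℝ} (hx : ∀ k, 0 ≤ x k)
    (hxk : ∀ k, x (k + 1) = g (x k)) (h0 : x 0 ≤ (1 + r) • u) :
    ∀ k, x k ≤ (1 + (1 - δ) ^ k * r) • u
  | 0 => by simpa using h0
  | k + 1 => by
    rw [hxk, pow_succ', mul_assoc]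
    exact hg.apply_le_one_add_mul_smul hmono hu hfix hδ
      (mul_nonneg (pow_nonneg (sub_nonneg.2 hδ1) k) hr0) (hx k)
      (hg.le_one_add_pow_mul_smul_of_iterate hmono hu hfix hδ hδ1 hr0 hx hxk h0 k)

end RayThroughFixedPoint

/-- Geometric convergence of the fixed point iteration for positive
concave mappings. -/
theorem pc_fixed_point_iteration_geometric {n : ℕ}
    (g : (Fin n → ℝ) → (Fin n → ℝ))
    (hpos : ∀ z : Fin n → ℝ, 0 ≤ z → ∀ i, 0 < g z i)
    (hconc : ∀ x y : Fin n → ℝ, 0 ≤ x → 0 ≤ y → ∀ t : ℝ, 0 < t → t < 1 →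
      t • g x + (1 - t) • g y ≤ g (t • x + (1 - t) • y))
    (xstar : Fin n → ℝ) (hxstar : ∀ i, 0 < xstar i) (hfix : g xstar = xstar)
    (x₁ : Fin n → ℝ) (hx₁ : 0 ≤ x₁)
    (x : ℕ → Fin n → ℝ) (hx0 : x 0 = x₁) (hxk : ∀ k, x (k + 1) = g (x k)) :
    ∃ c : ℝ, 0 ≤ c ∧ c < 1 ∧ ∃ γ : ℝ, 0 < γ ∧
      ∀ k : ℕ, ‖x (k + 1) - xstar‖ ≤ γ * c ^ k := by
  have hg := concaveOn_Ici_zero_of_forall_lt_one hconc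
  have hnn : ∀ z, 0 ≤ z → 0 ≤ g z := fun z hz i => (hpos z hz i).le
  have hmono := hg.monotoneOn_Ici_zero hnn
  have hu : 0 ≤ xstar := fun i => (hxstar i).le
  have hx : ∀ k, 0 ≤ x k := by
    intro k
    induction k with
    | zero => exact hx0 ▸ hx₁
    | succ k ih => exact hxk k ▸ hnn _ ih
  obtain ⟨δ, hδ0, hδ1, hδ⟩ := exists_pos_lt_one_smul_le xstar (hpos 0 le_rfl)
  obtain ⟨a, ha0, ha1, ha⟩ := exists_pos_lt_one_smul_le xstar (hxk 0 ▸ hpos _ (hx 0))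
  obtain ⟨b, hb1, hb⟩ := exists_one_le_le_smul hxstar (x 1)
  have hlo := hg.one_sub_pow_mul_smul_le_of_iterate hmono hu hfix hδ hδ0.le hδ1.le
    (r := 1 - a) (by linarith) (by linarith) (x := fun k => x (k + 1)) (fun k => hxk (k + 1))
    (by simpa using ha)
  have hhi := hg.le_one_add_pow_mul_smul_of_iterate hmono hu hfix hδ hδ1.le
    (r := b - 1) (by linarith) (x := fun k => x (k + 1)) (fun k => hx (k + 1))
    (fun k => hxk (k + 1)) (by simpa using hb)
  set M := max (1 - a) (b - 1)
  refine ⟨1 - δ, by linarith, by linarith, M * ‖xstar‖ + 1, by positivity, fun k => ?_⟩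
  have hck : 0 ≤ (1 - δ) ^ k := pow_nonneg (by linarith) k
  calc ‖x (k + 1) - xstar‖ ≤ (1 - δ) ^ k * M * ‖xstar‖ := by
        refine norm_sub_le_of_one_sub_smul_le_of_le_one_add_smul (by positivity)
          ((smul_le_smul_of_nonneg_right ?_ hu).trans (hlo k))
          ((hhi k).trans (smul_le_smul_of_nonneg_right ?_ hu))
        · gcongr; exact le_max_left _ _
        · gcongr; exact le_max_right _ _
    _ ≤ (M * ‖xstar‖ + 1) * (1 - δ) ^ k := by nlinarith
end

section
/- Existence, uniqueness, and convergence for bounded positive concave DEQ layers: let W be an n×n matrix with nonnegative entries, x ∈ int(ℝⁿ₊), and σ : ℝ₊ → ℝ₊ a scalar function that is concave, monotone nondecreasing, bounded above by some M > 0, and strictly positive on (0,∞); define g(z) = σ(Wz + x) componentwise. Then g has exactly one fixed point z⋆ ∈ int(ℝⁿ₊), and for every initial point z₁ ∈ ℝⁿ₊ the fixed point iteration z_{k+1} = g(z_k) converges to z⋆. -/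
open Filter

/-- Existence, uniqueness and convergence for bounded positive concave
DEQ layers. -/
theorem pcDEQ_exist_uniq_converge {n : ℕ}
    (W : Matrix (Fin n) (Fin n) ℝ) (hW : ∀ i j, 0 ≤ W i j)
    (x : Fin n → ℝ) (hx : ∀ i, 0 < x i)
    (σ : ℝ → ℝ) (M : ℝ) (hM : 0 < M)
    (hσ_nonneg : ∀ v : ℝ, 0 ≤ v → 0 ≤ σ v)
    (hσ_conc : ∀ u v : ℝ, 0 ≤ u → 0 ≤ v → ∀ t : ℝ, 0 < t → t < 1 →
      t * σ u + (1 - t) * σ v ≤ σ (t * u + (1 - t) * v))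
    (hσ_mono : ∀ u v : ℝ, 0 ≤ u → u ≤ v → σ u ≤ σ v)
    (hσ_bdd : ∀ v : ℝ, 0 ≤ v → σ v ≤ M)
    (hσ_pos : ∀ v : ℝ, 0 < v → 0 < σ v)
    (g : (Fin n → ℝ) → (Fin n → ℝ))
    (hg : ∀ z : Fin n → ℝ, ∀ i, g z i = σ ((W.mulVec z + x) i)) :
    ∃ zstar : Fin n → ℝ, (∀ i, 0 < zstar i) ∧ g zstar = zstar ∧
      (∀ y : Fin n → ℝ, 0 ≤ y → g y = y → y = zstar) ∧
      (∀ z : ℕ → Fin n → ℝ, 0 ≤ z 0 → (∀ k, z (k + 1) = g (z k)) →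
        Tendsto z atTop (nhds zstar)) := by
  classical
  -- trivial case n = 0
  rcases Nat.eq_zero_or_pos n with hn | hn
  · subst hn
    refine ⟨fun i => i.elim0, fun i => i.elim0, ?_, ?_, ?_⟩
    · funext i; exact i.elim0
    · intro y _ _; funext i; exact i.elim0
    · intro z _ _
      have hz : z = fun _ => fun i => i.elim0 := by funext k i; exact i.elim0
      have hc : (fun i : Fin 0 => i.elim0 (α := ℝ)) = fun i : Fin 0 => i.elim0 := rfl
      rw [hz]
      exact tendsto_const_nhds
  haveI hne : Nonempty (Fin n) := ⟨⟨0, hn⟩⟩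
  -- positivity of arguments
  have hF_pos : ∀ z : Fin n → ℝ, 0 ≤ z → ∀ i, 0 < (W.mulVec z + x) i := by
    intro z hz i
    have h1 : 0 ≤ W.mulVec z i := by
      simp only [Matrix.mulVec, dotProduct]
      exact Finset.sum_nonneg fun j _ => mul_nonneg (hW i j) (hz j)
    have := add_pos_of_nonneg_of_pos h1 (hx i)
    simpa using this
  have hg_pos : ∀ z : Fin n → ℝ, 0 ≤ z → ∀ i, 0 < g z i := by
    intro z hz i; rw [hg]; exact hσ_pos _ (hF_pos z hz i)
  have hg_nonneg : ∀ z : Fin n → ℝ, 0 ≤ z → 0 ≤ g z :=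
    fun z hz i => (hg_pos z hz i).le
  have hg_le : ∀ z : Fin n → ℝ, 0 ≤ z → ∀ i, g z i ≤ M := by
    intro z hz i; rw [hg]; exact hσ_bdd _ (hF_pos z hz i).le
  have hg_mono : ∀ z y : Fin n → ℝ, 0 ≤ z → z ≤ y → g z ≤ g y := by
    intro z y hz hzy i
    rw [hg, hg]
    apply hσ_mono _ _ (hF_pos z hz i).le
    have hmv : W.mulVec z i ≤ W.mulVec y i := by
      simp only [Matrix.mulVec, dotProduct]
      exact Finset.sum_le_sum fun j _ => mul_le_mul_of_nonneg_left (hzy j) (hW i j)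
    simpa using add_le_add_right hmv (x i)
  -- concavity transferred to g
  have hscal : ∀ z : Fin n → ℝ, 0 ≤ z → ∀ t : ℝ, 0 < t → t < 1 →
      ∀ i, t * g z i + (1 - t) * g 0 i ≤ g (t • z) i := by
    intro z hz t ht0 ht1 i
    rw [hg, hg, hg]
    have key : (W.mulVec (t • z) + x) i
        = t * ((W.mulVec z + x) i) + (1 - t) * ((W.mulVec 0 + x) i) := by
      have h0 : W.mulVec (0 : Fin n → ℝ) = 0 := Matrix.mulVec_zero W
      have h1 : W.mulVec (t • z) = t • W.mulVec z := Matrix.mulVec_smul W t z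
      simp only [h0, h1, Pi.add_apply, Pi.smul_apply, Pi.zero_apply, smul_eq_mul]
      ring
    rw [key]
    exact hσ_conc _ _ (hF_pos z hz i).le (hF_pos 0 le_rfl i).le t ht0 ht1
  -- strict sub-homogeneity for α > 1
  have hstrict : ∀ z : Fin n → ℝ, 0 ≤ z → ∀ α : ℝ, 1 < α →
      ∀ i, g (α • z) i < α * g z i := by
    intro z hz α hα i
    have hα0 : (0:ℝ) < α := lt_trans one_pos hα
    have ht0 : (0:ℝ) < 1/α := by positivity
    have ht1 : 1/α < 1 := by rw [div_lt_one hα0]; exact hα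
    have hz' : 0 ≤ α • z := fun j => by
      have := mul_nonneg hα0.le (hz j); simpa [smul_eq_mul] using this
    have h := hscal (α • z) hz' (1/α) ht0 ht1 i
    have he : (1/α) • (α • z) = z := by
      rw [smul_smul, one_div_mul_cancel hα0.ne', one_smul]
    rw [he] at h
    have hg0 : 0 < g 0 i := hg_pos 0 le_rfl i
    have hlt : (1/α) * g (α • z) i < g z i := by nlinarith
    calc g (α • z) i = α * ((1/α) * g (α • z) i) := by field_simp
      _ < α * g z i := by exact mul_lt_mul_of_pos_left hlt hα0
  -- uniqueness comparison
  have huniq_le : ∀ y z : Fin n → ℝ, (∀ i, 0 < y i) → (∀ i, 0 < z i) →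
      g y = y → g z = z → y ≤ z := by
    intro y z hy hz hgy hgz
    by_contra hcon
    rw [Pi.le_def] at hcon
    push_neg at hcon
    obtain ⟨j, hj⟩ := hcon
    set α := Finset.univ.sup' Finset.univ_nonempty (fun i => y i / z i) with hαdef
    have hαge : ∀ i, y i / z i ≤ α := fun i => Finset.le_sup' (fun i => y i / z i) (Finset.mem_univ i)
    obtain ⟨i0, _, hi0⟩ := Finset.exists_mem_eq_sup' Finset.univ_nonempty (fun i => y i / z i)
    have hα1 : 1 < α := lt_of_lt_of_le ((one_lt_div (hz j)).mpr hj) (hαge j)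
    have hyle : y ≤ α • z := fun i => by
      have := (div_le_iff₀ (hz i)).mp (hαge i)
      simpa [smul_eq_mul] using this
    have heq : y i0 = α * z i0 := by
      have hα' : α = y i0 / z i0 := hi0
      rw [hα', div_mul_cancel₀ _ (hz i0).ne']
    have hlt : y i0 < y i0 := by
      calc y i0 = g y i0 := by rw [hgy]
        _ ≤ g (α • z) i0 := hg_mono y (α • z) (fun i => (hy i).le) hyle i0
        _ < α * g z i0 := hstrict z (fun i => (hz i).le) α hα1 i0
        _ = α * z i0 := by rw [hgz]
        _ = y i0 := heq.symm
    exact absurd hlt (lt_irrefl _)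
  -- continuity of σ on (0,∞)
  have hσ_concave : ConcaveOn ℝ (Set.Ici 0) σ := by
    constructor
    · exact convex_Ici 0
    · intro u hu v hv a b ha hb hab
      rcases ha.eq_or_lt with ha0 | ha0
      · have hb1 : b = 1 := by linarith
        simp [← ha0, hb1]
      · rcases hb.eq_or_lt with hb0 | hb0
        · have ha1 : a = 1 := by linarith
          simp [← hb0, ha1]
        · have hb' : b = 1 - a := by linarith
          have ha1 : a < 1 := by linarith
          subst hb'
          simpa [smul_eq_mul] using
            hσ_conc u v (Set.mem_Ici.mp hu) (Set.mem_Ici.mp hv) a ha0 ha1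
  have hσ_cont : ContinuousOn σ (Set.Ioi 0) := by
    have := hσ_concave.continuousOn_interior
    rwa [interior_Ici] at this
  have hg_contAt : ∀ p : Fin n → ℝ, 0 ≤ p → ContinuousAt g p := by
    intro p hp
    have hgfun : g = fun z => fun i => σ ((W.mulVec z + x) i) := by
      funext z i; exact hg z i
    rw [hgfun]
    apply continuousAt_pi.mpr
    intro i
    have hlin : Continuous fun z : Fin n → ℝ => (W.mulVec z + x) i := by
      simp only [Pi.add_apply]
      apply Continuous.add _ continuous_const
      simp only [Matrix.mulVec, dotProduct]
      exact continuous_finset_sum _ fun j _ => continuous_const.mul (continuous_apply j)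
    have hσat : ContinuousAt σ ((W.mulVec p + x) i) :=
      hσ_cont.continuousAt (Ioi_mem_nhds (hF_pos p hp i))
    show ContinuousAt (σ ∘ fun z : Fin n → ℝ => (W.mulVec z + x) i) p
    exact ContinuousAt.comp (f := fun z : Fin n → ℝ => (W.mulVec z + x) i) (x := p)
      hσat hlin.continuousAt
  -- the decreasing sequence from above
  set u : ℕ → Fin n → ℝ := fun k => g^[k] (fun _ => M) with hu_def
  have hu_succ : ∀ k, u (k+1) = g (u k) := fun k => Function.iterate_succ_apply' g k _
  have hu0 : u 0 = fun _ => M := rfl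
  have hu_nonneg : ∀ k, 0 ≤ u k := by
    intro k
    induction k with
    | zero => intro i; rw [hu0]; exact hM.le
    | succ k ih => rw [hu_succ]; exact hg_nonneg _ ih
  have hu_dec1 : ∀ k, u (k+1) ≤ u k := by
    intro k
    induction k with
    | zero =>
        intro i
        have h1 : u 1 i = g (u 0) i := by rw [hu_succ]
        rw [h1]
        exact hg_le _ (hu_nonneg 0) i
    | succ k ih =>
        calc u (k+2) = g (u (k+1)) := hu_succ (k+1)
          _ ≤ g (u k) := hg_mono _ _ (hu_nonneg (k+1)) ih
          _ = u (k+1) := (hu_succ k).symm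
  have hu_anti : ∀ i, Antitone fun k => u k i :=
    fun i => antitone_nat_of_succ_le fun k => hu_dec1 k i
  have hu_lb : ∀ k i, g 0 i ≤ u k i := by
    intro k i
    cases k with
    | zero => rw [hu0]; exact hg_le 0 le_rfl i
    | succ k => rw [hu_succ]; exact hg_mono 0 (u k) le_rfl (hu_nonneg k) i
  set zstar : Fin n → ℝ := fun i => ⨅ k, u k i with hzstar_def
  have hzstar_tend : Tendsto u atTop (nhds zstar) := by
    rw [tendsto_pi_nhds]
    intro i
    apply tendsto_atTop_ciInf (hu_anti i)
    refine ⟨g 0 i, ?_⟩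
    rintro v ⟨k, rfl⟩
    exact hu_lb k i
  have hzstar_ge : ∀ i, g 0 i ≤ zstar i := fun i => le_ciInf fun k => hu_lb k i
  have hzstar_pos : ∀ i, 0 < zstar i :=
    fun i => lt_of_lt_of_le (hg_pos 0 le_rfl i) (hzstar_ge i)
  have hzstar_nonneg : 0 ≤ zstar := fun i => (hzstar_pos i).le
  have hfix : g zstar = zstar := by
    have h1 : Tendsto (fun k => g (u k)) atTop (nhds (g zstar)) :=
      ((hg_contAt zstar hzstar_nonneg).tendsto).comp hzstar_tend
    have h2 : Tendsto (fun k => g (u k)) atTop (nhds zstar) := by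
      have heq : (fun k => g (u k)) = fun k => u (k+1) := by
        funext k; rw [hu_succ]
      rw [heq]
      exact (tendsto_add_atTop_iff_nat 1).mpr hzstar_tend
    exact tendsto_nhds_unique h1 h2
  have huniq : ∀ y : Fin n → ℝ, 0 ≤ y → g y = y → y = zstar := by
    intro y hy hgy
    have hy_pos : ∀ i, 0 < y i := fun i => by rw [← hgy]; exact hg_pos y hy i
    exact le_antisymm (huniq_le y zstar hy_pos hzstar_pos hgy hfix)
      (huniq_le zstar y hzstar_pos hy_pos hfix hgy)
  refine ⟨zstar, hzstar_pos, hfix, huniq, ?_⟩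
  -- convergence from any nonnegative start
  intro z hz0 hz_succ
  have hz_nonneg : ∀ k, 0 ≤ z k := by
    intro k
    induction k with
    | zero => exact hz0
    | succ k ih => rw [hz_succ]; exact hg_nonneg _ ih
  -- choose small t
  set c : ℝ := Finset.univ.inf' Finset.univ_nonempty (fun i => g 0 i / zstar i) with hc_def
  have hc_pos : 0 < c := by
    rw [hc_def, Finset.lt_inf'_iff]
    intro i _
    exact div_pos (hg_pos 0 le_rfl i) (hzstar_pos i)
  have hc_le : ∀ i, c ≤ g 0 i / zstar i :=
    fun i => Finset.inf'_le _ (Finset.mem_univ i)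
  have hc_le1 : c ≤ 1 := by
    obtain ⟨i⟩ := hne
    refine le_trans (hc_le i) ?_
    rw [div_le_one (hzstar_pos i)]
    exact hzstar_ge i
  set t : ℝ := c / 2 with ht_def
  have ht0 : 0 < t := by positivity
  have ht1 : t < 1 := by rw [ht_def]; linarith
  have hl0_le_g0 : ∀ i, t * zstar i ≤ g 0 i := by
    intro i
    have h1 : t ≤ g 0 i / zstar i := le_trans (by rw [ht_def]; linarith) (hc_le i)
    calc t * zstar i ≤ (g 0 i / zstar i) * zstar i :=
          mul_le_mul_of_nonneg_right h1 (hzstar_pos i).le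
      _ = g 0 i := div_mul_cancel₀ _ (hzstar_pos i).ne'
  -- the increasing sequence from below
  set l : ℕ → Fin n → ℝ := fun k => g^[k] (t • zstar) with hl_def
  have hl_succ : ∀ k, l (k+1) = g (l k) := fun k => Function.iterate_succ_apply' g k _
  have hl0 : l 0 = t • zstar := rfl
  have hl0_nonneg : 0 ≤ l 0 := by
    intro i; rw [hl0]
    exact mul_nonneg ht0.le (hzstar_pos i).le
  have hl_nonneg : ∀ k, 0 ≤ l k := by
    intro k
    induction k with
    | zero => exact hl0_nonneg
    | succ k ih => rw [hl_succ]; exact hg_nonneg _ ih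
  have hl_le_zstar : ∀ k, l k ≤ zstar := by
    intro k
    induction k with
    | zero =>
        intro i; rw [hl0]
        have : t * zstar i ≤ 1 * zstar i :=
          mul_le_mul_of_nonneg_right ht1.le (hzstar_pos i).le
        simpa using this
    | succ k ih =>
        rw [hl_succ, ← hfix]
        exact hg_mono _ _ (hl_nonneg k) ih
  have hl_inc : ∀ k, l k ≤ l (k+1) := by
    intro k
    induction k with
    | zero =>
        intro i
        rw [hl_succ, hl0]
        have h := hscal zstar hzstar_nonneg t ht0 ht1 i
        rw [hfix] at h
        have hg0 : 0 ≤ (1 - t) * g 0 i :=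
          mul_nonneg (by linarith) (hg_pos 0 le_rfl i).le
        have : t * zstar i ≤ g (t • zstar) i := by linarith
        simpa [smul_eq_mul] using this
    | succ k ih =>
        calc l (k+1) = g (l k) := hl_succ k
          _ ≤ g (l (k+1)) := hg_mono _ _ (hl_nonneg k) ih
          _ = l (k+2) := (hl_succ (k+1)).symm
  have hl_mono : ∀ i, Monotone fun k => l k i :=
    fun i => monotone_nat_of_le_succ fun k => hl_inc k i
  set p : Fin n → ℝ := fun i => ⨆ k, l k i with hp_def
  have hp_tend : Tendsto l atTop (nhds p) := by
    rw [tendsto_pi_nhds]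
    intro i
    apply tendsto_atTop_ciSup (hl_mono i)
    refine ⟨zstar i, ?_⟩
    rintro v ⟨k, rfl⟩
    exact hl_le_zstar k i
  have hp_ge : ∀ i, l 0 i ≤ p i := by
    intro i
    exact le_ciSup ⟨zstar i, by rintro v ⟨k, rfl⟩; exact hl_le_zstar k i⟩ 0
  have hp_nonneg : 0 ≤ p := fun i => le_trans (hl0_nonneg i) (hp_ge i)
  have hp_fix : g p = p := by
    have h1 : Tendsto (fun k => g (l k)) atTop (nhds (g p)) :=
      ((hg_contAt p hp_nonneg).tendsto).comp hp_tend
    have h2 : Tendsto (fun k => g (l k)) atTop (nhds p) := by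
      have heq : (fun k => g (l k)) = fun k => l (k+1) := by
        funext k; rw [hl_succ]
      rw [heq]
      exact (tendsto_add_atTop_iff_nat 1).mpr hp_tend
    exact tendsto_nhds_unique h1 h2
  have hp_eq : p = zstar := huniq p hp_nonneg hp_fix
  -- squeeze
  have hsq : ∀ k, l k ≤ z (k+1) ∧ z (k+1) ≤ u k := by
    intro k
    induction k with
    | zero =>
        constructor
        · intro i
          rw [hz_succ, hl0]
          have h1 : (t • zstar) i ≤ g 0 i := by
            simpa [smul_eq_mul] using hl0_le_g0 i
          exact le_trans h1 (hg_mono 0 (z 0) le_rfl hz0 i)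
        · intro i
          rw [hz_succ, hu0]
          exact hg_le _ hz0 i
    | succ k ih =>
        constructor
        · rw [hz_succ, hl_succ]
          exact hg_mono _ _ (hl_nonneg k) ih.1
        · rw [hz_succ, hu_succ]
          exact hg_mono _ _ (hz_nonneg (k+1)) ih.2
  rw [tendsto_pi_nhds]
  intro i
  have hl_tend_i : Tendsto (fun k => l k i) atTop (nhds (zstar i)) := by
    have := tendsto_pi_nhds.mp hp_tend i
    rwa [hp_eq] at this
  have hu_tend_i : Tendsto (fun k => u k i) atTop (nhds (zstar i)) :=
    tendsto_pi_nhds.mp hzstar_tend i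
  have h1 : Tendsto (fun k => z (k+1) i) atTop (nhds (zstar i)) :=
    tendsto_of_tendsto_of_tendsto_of_le_of_le hl_tend_i hu_tend_i
      (fun k => (hsq k).1 i) (fun k => (hsq k).2 i)
  exact (tendsto_add_atTop_iff_nat 1).mp h1
end
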